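/- Let T be an infinite rooted tree, ψ : T → ℂ, and m ≠ n natural numbers. If μ := sup_{v≠o} |ψ'(v)|·ℓ_m(|v|)·Λ_n(|v|) and ν := sup_{v≠o} |ψ(v⁻)|·Λ_n(|v|)/Λ_m(|v|) are both finite, then the multiplication operator M_ψ maps L^(m) into L^(n), and for every f ∈ L^(m), ‖ψf‖_n ≤ (|ψ(o)| + μ + ν)·‖f‖_m. -/

import Mathlib

open Real Filter

/-- Iterated logarithm: ℓ₀(x) = x, ℓ_{j+1}(x) = 1 + log ℓ_j(x). -/
noncomputable def ell : ℕ → ℝ → ℝ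
  | 0, x => x
  | j + 1, x => 1 + Real.log (ell j x)

/-- Λ_k(x) = ∏_{j=0}^{k-1} ℓ_j(x). -/
noncomputable def Lam (k : ℕ) (x : ℝ) : ℝ := ∏ j ∈ Finset.range k, ell j x

/-- Discrete derivative of f on a rooted tree given by a parent map:
`f v - f (parent v)` (automatically 0 at the root since `parent o = o`). -/
def Der {V : Type*} (parent : V → V) (f : V → ℂ) (v : V) : ℂ := f v - f (parent v)

/-- The set of values |f'(v)|·Λ_k(|v|) over v ≠ o; f ∈ L^(k) iff this set is bounded above. -/
def lipSet {V : Type*} (o : V) (parent : V → V) (depth : V → ℕ) (k : ℕ) (f : V → ℂ) : Set ℝ :=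
  {r | ∃ v, v ≠ o ∧ r = ‖Der parent f v‖ * Lam k (depth v)}

/-- ‖f‖_k = |f(o)| + sup_{v ≠ o} |f'(v)|·Λ_k(|v|). -/
noncomputable def lipNorm {V : Type*} (o : V) (parent : V → V) (depth : V → ℕ) (k : ℕ)
    (f : V → ℂ) : ℝ :=
  ‖f o‖ + sSup (lipSet o parent depth k f)

/-!
By the product rule `(ψf)'(v) = ψ'(v) f(v) + ψ(v⁻) f'(v)`. The second term, weighted by `Λ_n`, is
at most `ν ‖f‖_m`. For the first, `|f(v)| ≤ ℓ_m(|v|) ‖f‖_m`: summing `|f'| ≤ ‖f‖_m / Λ_m` along the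
path from `v` to the root leaves `∑_{j=1}^{|v|} 1/Λ_m(j)`, a lower Riemann sum for
`ℓ_m' = 1/Λ_m`, hence at most `ℓ_m(|v|)`. So the first term is at most `μ ‖f‖_m`.
-/

lemma one_le_ell {x : ℝ} (hx : 1 ≤ x) (j : ℕ) : 1 ≤ ell j x := by
  induction j with
  | zero => exact hx
  | succ j ih => simp only [ell]; linarith [Real.log_nonneg ih]

lemma ell_le_ell {x y : ℝ} (hx : 1 ≤ x) (hxy : x ≤ y) (j : ℕ) : ell j x ≤ ell j y := by
  induction j with
  | zero => exact hxy
  | succ j ih =>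
    simp only [ell]
    gcongr
    exact zero_lt_one.trans_le (one_le_ell hx j)

lemma ell_one (j : ℕ) : ell j 1 = 1 := by
  induction j with
  | zero => rfl
  | succ j ih => simp [ell, ih]

lemma Lam_succ (k : ℕ) (x : ℝ) : Lam (k + 1) x = Lam k x * ell k x :=
  Finset.prod_range_succ _ _

lemma Lam_one (k : ℕ) : Lam k 1 = 1 := by simp [Lam, ell_one]

lemma Lam_pos {x : ℝ} (hx : 1 ≤ x) (k : ℕ) : 0 < Lam k x :=
  Finset.prod_pos fun j _ => zero_lt_one.trans_le (one_le_ell hx j)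

lemma sub_div_Lam_le_ell_sub {x y : ℝ} (hx : 1 ≤ x) (hxy : x ≤ y) (k : ℕ) :
    (y - x) / Lam k y ≤ ell k y - ell k x := by
  induction k with
  | zero => simp [ell, Lam]
  | succ k ih =>
    have hx0 : 0 < ell k x := zero_lt_one.trans_le (one_le_ell hx k)
    have hy0 : 0 < ell k y := hx0.trans_le (ell_le_ell hx hxy k)
    have hlog := Real.one_sub_inv_le_log_of_pos (div_pos hy0 hx0)
    rw [inv_div, Real.log_div hy0.ne' hx0.ne'] at hlog
    calc (y - x) / Lam (k + 1) y = (y - x) / Lam k y / ell k y := by rw [Lam_succ, div_div]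
      _ ≤ (ell k y - ell k x) / ell k y := by gcongr
      _ = 1 - ell k x / ell k y := by field_simp
      _ ≤ ell (k + 1) y - ell (k + 1) x := by simp only [ell]; linarith

lemma sum_inv_Lam_le_ell (k : ℕ) {d : ℕ} (hd : 1 ≤ d) :
    ∑ j ∈ Finset.Icc 1 d, (Lam k j)⁻¹ ≤ ell k d := by
  induction d, hd using Nat.le_induction with
  | base => simp [Lam_one, ell_one]
  | succ d hd ih =>
    have hgap := sub_div_Lam_le_ell_sub (x := d) (y := d + 1) (by exact_mod_cast hd) (by linarith) k
    rw [add_sub_cancel_left, one_div] at hgap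
    rw [Finset.sum_Icc_succ_top (by omega)]
    push_cast
    linarith

section Tree

variable {V : Type*} {o : V} {parent : V → V} {depth : V → ℕ}

lemma one_le_depth (hdepth : ∀ v, v ≠ o → depth v = depth (parent v) + 1) {v : V} (hv : v ≠ o) :
    (1 : ℝ) ≤ depth v := by
  rw [hdepth v hv]
  exact_mod_cast Nat.le_add_left 1 _

lemma Der_mul (ψ f : V → ℂ) (v : V) :
    Der parent (fun w => ψ w * f w) v = Der parent ψ v * f v + ψ (parent v) * Der parent f v := by
  simp only [Der]
  ring

lemma norm_le_norm_root_add_sum (hdepth0 : depth o = 0)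
    (hdepth : ∀ v, v ≠ o → depth v = depth (parent v) + 1) {f : V → ℂ} {b : ℕ → ℝ}
    (hb : ∀ v, v ≠ o → ‖Der parent f v‖ ≤ b (depth v)) (v : V) :
    ‖f v‖ ≤ ‖f o‖ + ∑ j ∈ Finset.Icc 1 (depth v), b j := by
  suffices ∀ d, ∀ v, depth v = d → ‖f v‖ ≤ ‖f o‖ + ∑ j ∈ Finset.Icc 1 d, b j from this _ v rfl
  intro d
  induction d with
  | zero =>
    intro v hv
    obtain rfl : v = o := by
      by_contra hvo
      have := hdepth v hvo
      omega
    simp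
  | succ d ih =>
    intro v hv
    have hvo : v ≠ o := by
      rintro rfl
      omega
    have hparent : depth (parent v) = d := by
      have := hdepth v hvo
      omega
    calc ‖f v‖ = ‖f (parent v) + Der parent f v‖ := by simp [Der]
      _ ≤ ‖f (parent v)‖ + ‖Der parent f v‖ := norm_add_le _ _
      _ ≤ (‖f o‖ + ∑ j ∈ Finset.Icc 1 d, b j) + b (d + 1) :=
        add_le_add (ih _ hparent) (hv ▸ hb v hvo)
      _ = ‖f o‖ + ∑ j ∈ Finset.Icc 1 (d + 1), b j := by
        rw [Finset.sum_Icc_succ_top (by omega)]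
        ring

lemma le_sSup_lipSet {k : ℕ} {f : V → ℂ} (hf : BddAbove (lipSet o parent depth k f)) {v : V}
    (hv : v ≠ o) : ‖Der parent f v‖ * Lam k (depth v) ≤ sSup (lipSet o parent depth k f) :=
  le_csSup hf ⟨v, hv, rfl⟩

lemma sSup_lipSet_nonneg (hdepth : ∀ v, v ≠ o → depth v = depth (parent v) + 1) (k : ℕ)
    (f : V → ℂ) : 0 ≤ sSup (lipSet o parent depth k f) := by
  refine Real.sSup_nonneg ?_
  rintro _ ⟨v, hv, rfl⟩
  exact mul_nonneg (norm_nonneg _) (Lam_pos (one_le_depth hdepth hv) k).le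

lemma norm_root_le_lipNorm (hdepth : ∀ v, v ≠ o → depth v = depth (parent v) + 1) (k : ℕ)
    (f : V → ℂ) : ‖f o‖ ≤ lipNorm o parent depth k f :=
  le_add_of_nonneg_right (sSup_lipSet_nonneg hdepth k f)

lemma bddAbove_lipSet_of_forall_le {k : ℕ} {g : V → ℂ} {C : ℝ}
    (h : ∀ v, v ≠ o → ‖Der parent g v‖ * Lam k (depth v) ≤ C) :
    BddAbove (lipSet o parent depth k g) :=
  ⟨C, by rintro _ ⟨v, hv, rfl⟩; exact h v hv⟩

lemma lipNorm_le_of_forall_le {k : ℕ} {g : V → ℂ} {C : ℝ} (hC : 0 ≤ C)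
    (h : ∀ v, v ≠ o → ‖Der parent g v‖ * Lam k (depth v) ≤ C) :
    lipNorm o parent depth k g ≤ ‖g o‖ + C :=
  add_le_add_right (Real.sSup_le (by rintro _ ⟨v, hv, rfl⟩; exact h v hv) hC) _

lemma norm_le_ell_mul_lipNorm (hdepth0 : depth o = 0)
    (hdepth : ∀ v, v ≠ o → depth v = depth (parent v) + 1) {k : ℕ} {f : V → ℂ}
    (hf : BddAbove (lipSet o parent depth k f)) {v : V} (hv : v ≠ o) :
    ‖f v‖ ≤ ell k (depth v) * lipNorm o parent depth k f := by
  set S := sSup (lipSet o parent depth k f)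
  have hS : 0 ≤ S := sSup_lipSet_nonneg hdepth k f
  have hb : ∀ w, w ≠ o → ‖Der parent f w‖ ≤ S * (Lam k (depth w))⁻¹ := fun w hw => by
    rw [← div_eq_mul_inv, le_div_iff₀ (Lam_pos (one_le_depth hdepth hw) k)]
    exact le_sSup_lipSet hf hw
  have hsum := sum_inv_Lam_le_ell k (d := depth v) (by exact_mod_cast one_le_depth hdepth hv)
  have hell := one_le_ell (one_le_depth hdepth hv) k
  calc ‖f v‖ ≤ ‖f o‖ + ∑ j ∈ Finset.Icc 1 (depth v), S * (Lam k j)⁻¹ :=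
        norm_le_norm_root_add_sum hdepth0 hdepth hb v
    _ = ‖f o‖ + S * ∑ j ∈ Finset.Icc 1 (depth v), (Lam k j)⁻¹ := by rw [Finset.mul_sum]
    _ ≤ ‖f o‖ + S * ell k (depth v) := by gcongr
    _ ≤ ell k (depth v) * (‖f o‖ + S) := by nlinarith [norm_nonneg (f o)]

lemma norm_Der_mul_mul_Lam_le {ψ f : V → ℂ} {m n : ℕ} {μ ν N : ℝ} {v : V}
    (hv : (1 : ℝ) ≤ depth v)
    (hμ : ‖Der parent ψ v‖ * ell m (depth v) * Lam n (depth v) ≤ μ)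
    (hν : ‖ψ (parent v)‖ * Lam n (depth v) / Lam m (depth v) ≤ ν)
    (hfv : ‖f v‖ ≤ ell m (depth v) * N) (hf' : ‖Der parent f v‖ * Lam m (depth v) ≤ N) :
    ‖Der parent (fun w => ψ w * f w) v‖ * Lam n (depth v) ≤ (μ + ν) * N := by
  have hLm := Lam_pos hv m
  have hLn := Lam_pos hv n
  have hN : 0 ≤ N := (mul_nonneg (norm_nonneg _) hLm.le).trans hf'
  have hterm₁ : ‖Der parent ψ v‖ * ‖f v‖ * Lam n (depth v) ≤ μ * N :=
    calc ‖Der parent ψ v‖ * ‖f v‖ * Lam n (depth v)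
        ≤ ‖Der parent ψ v‖ * (ell m (depth v) * N) * Lam n (depth v) := by gcongr
      _ = ‖Der parent ψ v‖ * ell m (depth v) * Lam n (depth v) * N := by ring
      _ ≤ μ * N := by gcongr
  have hterm₂ : ‖ψ (parent v)‖ * ‖Der parent f v‖ * Lam n (depth v) ≤ ν * N :=
    calc ‖ψ (parent v)‖ * ‖Der parent f v‖ * Lam n (depth v)
        = ‖ψ (parent v)‖ * Lam n (depth v) / Lam m (depth v) *
            (‖Der parent f v‖ * Lam m (depth v)) := by field_simp
      _ ≤ ν * N := mul_le_mul hν hf' (by positivity) (le_trans (by positivity) hν)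
  calc ‖Der parent (fun w => ψ w * f w) v‖ * Lam n (depth v)
      ≤ (‖Der parent ψ v‖ * ‖f v‖ + ‖ψ (parent v)‖ * ‖Der parent f v‖) * Lam n (depth v) := by
        rw [Der_mul, ← norm_mul, ← norm_mul]
        gcongr
        exact norm_add_le _ _
    _ ≤ (μ + ν) * N := by linarith

end Tree

theorem mult_bounded_sufficient_general {V : Type*} (o : V) (parent : V → V) (depth : V → ℕ)
    (hdepth0 : depth o = 0)
    (hdepth : ∀ v, v ≠ o → depth v = depth (parent v) + 1)
    (ψ : V → ℂ) (m n : ℕ)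
    (hμ : BddAbove {r : ℝ | ∃ v, v ≠ o ∧
      r = ‖Der parent ψ v‖ * ell m (depth v) * Lam n (depth v)})
    (hν : BddAbove {r : ℝ | ∃ v, v ≠ o ∧
      r = ‖ψ (parent v)‖ * Lam n (depth v) / Lam m (depth v)}) :
    ∀ f : V → ℂ, BddAbove (lipSet o parent depth m f) →
      BddAbove (lipSet o parent depth n (fun v => ψ v * f v)) ∧
      lipNorm o parent depth n (fun v => ψ v * f v) ≤
        (‖ψ o‖ +
          sSup {r : ℝ | ∃ v, v ≠ o ∧
            r = ‖Der parent ψ v‖ * ell m (depth v) * Lam n (depth v)} +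
          sSup {r : ℝ | ∃ v, v ≠ o ∧
            r = ‖ψ (parent v)‖ * Lam n (depth v) / Lam m (depth v)}) *
          lipNorm o parent depth m f := by
  intro f hf
  set μ := sSup {r : ℝ | ∃ v, v ≠ o ∧
    r = ‖Der parent ψ v‖ * ell m (depth v) * Lam n (depth v)}
  set ν := sSup {r : ℝ | ∃ v, v ≠ o ∧
    r = ‖ψ (parent v)‖ * Lam n (depth v) / Lam m (depth v)}
  set N := lipNorm o parent depth m f
  have hvertex : ∀ v, v ≠ o →
      ‖Der parent (fun w => ψ w * f w) v‖ * Lam n (depth v) ≤ (μ + ν) * N := fun v hv =>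
    norm_Der_mul_mul_Lam_le (one_le_depth hdepth hv) (le_csSup hμ ⟨v, hv, rfl⟩)
      (le_csSup hν ⟨v, hv, rfl⟩) (norm_le_ell_mul_lipNorm hdepth0 hdepth hf hv)
      ((le_sSup_lipSet hf hv).trans (le_add_of_nonneg_left (norm_nonneg _)))
  have hμ₀ : 0 ≤ μ := Real.sSup_nonneg <| by
    rintro _ ⟨v, hv, rfl⟩
    have := Lam_pos (one_le_depth hdepth hv) n
    have := one_le_ell (one_le_depth hdepth hv) m
    positivity
  have hν₀ : 0 ≤ ν := Real.sSup_nonneg <| by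
    rintro _ ⟨v, hv, rfl⟩
    have := Lam_pos (one_le_depth hdepth hv) n
    have := Lam_pos (one_le_depth hdepth hv) m
    positivity
  have hroot : ‖f o‖ ≤ N := norm_root_le_lipNorm hdepth m f
  have hN : 0 ≤ N := (norm_nonneg _).trans hroot
  refine ⟨bddAbove_lipSet_of_forall_le hvertex, ?_⟩
  calc lipNorm o parent depth n (fun v => ψ v * f v) ≤ ‖ψ o * f o‖ + (μ + ν) * N :=
        lipNorm_le_of_forall_le (by positivity) hvertex
    _ ≤ ‖ψ o‖ * N + (μ + ν) * N := by rw [norm_mul]; gcongr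
    _ = (‖ψ o‖ + μ + ν) * N := by ring

/-- If μ = sup |ψ'(v)|ℓ_m(|v|)Λ_n(|v|) and ν = sup |ψ(v⁻)|Λ_n(|v|)/Λ_m(|v|) are finite,
then M_ψ maps L^(m) into L^(n) with ‖ψf‖_n ≤ (|ψ(o)| + μ + ν)·‖f‖_m. -/
theorem mult_bounded_sufficient {V : Type*} (o : V) (parent : V → V) (depth : V → ℕ)
    (hpar : parent o = o) (hdepth0 : depth o = 0)
    (hdepth : ∀ v, v ≠ o → depth v = depth (parent v) + 1)
    (hchild : ∀ v, ∃ w, w ≠ o ∧ parent w = v)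
    (ψ : V → ℂ) (m n : ℕ) (hmn : m ≠ n)
    (hμ : BddAbove {r : ℝ | ∃ v, v ≠ o ∧
      r = ‖Der parent ψ v‖ * ell m (depth v) * Lam n (depth v)})
    (hν : BddAbove {r : ℝ | ∃ v, v ≠ o ∧
      r = ‖ψ (parent v)‖ * Lam n (depth v) / Lam m (depth v)}) :
    ∀ f : V → ℂ, BddAbove (lipSet o parent depth m f) →
      BddAbove (lipSet o parent depth n (fun v => ψ v * f v)) ∧
      lipNorm o parent depth n (fun v => ψ v * f v) ≤
        (‖ψ o‖ +
          sSup {r : ℝ | ∃ v, v ≠ o ∧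
            r = ‖Der parent ψ v‖ * ell m (depth v) * Lam n (depth v)} +
          sSup {r : ℝ | ∃ v, v ≠ o ∧
            r = ‖ψ (parent v)‖ * Lam n (depth v) / Lam m (depth v)}) *
          lipNorm o parent depth m f :=
  mult_bounded_sufficient_general o parent depth hdepth0 hdepth ψ m n hμ hν
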